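/- For every real x ≥ 0, Σ_{n=2}^∞ Γ(n/2) x^n / (n−1)! = √π · x · ( e^{x²/4} (1 + erf(x/2)) − 1 ). -/

import Mathlib

/-!
Split the series by the parity of `n`. For odd `n = 2m + 1`, the half-integer value
`Γ(m + 3/2) = (2m+1)‼ √π / 2^(m+1)` and `(2m+2)! = 2^(m+1) (m+1)! (2m+1)‼` turn the terms into
`√π x (x²/4)^(m+1) / (m+1)!`, which sum to `√π x (e^{x²/4} - 1)`. For even `n = 2m`,
`Γ(m+1) = m!` turns the terms into `2x c_m (x/2)^(2m+1)` with `c_m = 2^m / (2m+1)‼`.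
Since `c_{m+1} (2m+3) = 2 c_m`, the power series `G(y) = ∑ c_m y^(2m+1)` solves `G' = 1 + 2yG`
with `G(0) = 0`, so `(e^{-y²} G)' = e^{-y²}` and `G(y) = e^{y²} ∫₀^y e^{-t²} dt`.
-/

open Real

noncomputable def erf (x : ℝ) : ℝ :=
  (2 / Real.sqrt Real.pi) * ∫ t in (0:ℝ)..x, Real.exp (-t ^ 2)

open Nat

theorem Nat.factorial_le_doubleFactorial_two_mul_sub_one (m : ℕ) : m ! ≤ (2 * m - 1)‼ := by
  induction m with
  | zero => rfl
  | succ m ih =>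
    rw [show 2 * (m + 1) - 1 = 2 * m + 1 by omega, doubleFactorial_add_one, factorial_succ]
    exact Nat.mul_le_mul (by omega) ih

noncomputable def erfSeriesCoeff (m : ℕ) : ℝ := 2 ^ m / (2 * m + 1)‼

noncomputable def erfSeries (y : ℝ) : ℝ := ∑' m, erfSeriesCoeff m * y ^ (2 * m + 1)

theorem erfSeriesCoeff_nonneg (m : ℕ) : 0 ≤ erfSeriesCoeff m := by
  unfold erfSeriesCoeff; positivity

theorem erfSeriesCoeff_succ_mul (m : ℕ) :
    erfSeriesCoeff (m + 1) * (2 * (m + 1 : ℕ) + 1) = 2 * erfSeriesCoeff m := by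
  rw [erfSeriesCoeff, erfSeriesCoeff, show 2 * (m + 1) + 1 = 2 * m + 1 + 2 by ring,
    doubleFactorial_add_two]
  push_cast
  field_simp
  ring

theorem erfSeriesCoeff_mul_le (m : ℕ) : erfSeriesCoeff m * (2 * m + 1) ≤ 2 ^ m / m ! := by
  have hfac : (m ! : ℝ) ≤ (2 * m - 1)‼ := by
    exact_mod_cast factorial_le_doubleFactorial_two_mul_sub_one m
  calc erfSeriesCoeff m * (2 * m + 1) = 2 ^ m / (2 * m - 1)‼ := by
        rw [erfSeriesCoeff, doubleFactorial_add_one]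
        push_cast
        field_simp
    _ ≤ 2 ^ m / m ! := by gcongr

theorem norm_erfSeriesCoeff_mul_pow_le (m : ℕ) {y R : ℝ} (hy : |y| ≤ R) :
    ‖erfSeriesCoeff m * ((2 * m + 1) * y ^ (2 * m))‖ ≤ (2 * R ^ 2) ^ m / m ! := by
  calc ‖erfSeriesCoeff m * ((2 * m + 1) * y ^ (2 * m))‖
      = erfSeriesCoeff m * (2 * m + 1) * |y| ^ (2 * m) := by
        rw [Real.norm_eq_abs, abs_mul, abs_mul, abs_pow, abs_of_nonneg (erfSeriesCoeff_nonneg m),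
          abs_of_pos (by positivity : (0 : ℝ) < 2 * m + 1), mul_assoc]
    _ ≤ 2 ^ m / m ! * R ^ (2 * m) := by
        gcongr
        exact erfSeriesCoeff_mul_le m
    _ = (2 * R ^ 2) ^ m / m ! := by rw [mul_pow, pow_mul]; ring

theorem hasDerivAt_erfSeriesCoeff_mul_pow (m : ℕ) (z : ℝ) :
    HasDerivAt (fun z => erfSeriesCoeff m * z ^ (2 * m + 1))
      (erfSeriesCoeff m * ((2 * m + 1) * z ^ (2 * m))) z :=
  ((hasDerivAt_pow (2 * m + 1) z).const_mul (erfSeriesCoeff m)).congr_deriv (by simp)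

theorem summable_erfSeries (y : ℝ) :
    Summable fun m => erfSeriesCoeff m * y ^ (2 * m + 1) :=
  summable_of_summable_hasDerivAt_of_isPreconnected
    (g := fun m z => erfSeriesCoeff m * z ^ (2 * m + 1))
    (summable_pow_div_factorial (2 * (|y| + 1) ^ 2)) Metric.isOpen_ball
    (convex_ball 0 (|y| + 1)).isPreconnected (fun m z _ => hasDerivAt_erfSeriesCoeff_mul_pow m z)
    (fun m z hz => norm_erfSeriesCoeff_mul_pow_le m (mem_ball_zero_iff.mp hz).le)
    (Metric.mem_ball_self (by positivity)) (by simp) (by simp)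

theorem tsum_erfSeries_deriv (y : ℝ) :
    ∑' m, erfSeriesCoeff m * ((2 * m + 1) * y ^ (2 * m)) = 1 + 2 * y * erfSeries y := by
  have hs : Summable fun m => erfSeriesCoeff m * ((2 * m + 1) * y ^ (2 * m)) :=
    .of_norm_bounded (summable_pow_div_factorial _) fun m ↦
      norm_erfSeriesCoeff_mul_pow_le m le_rfl
  rw [hs.tsum_eq_zero_add, erfSeries, ← tsum_mul_left]
  congr 1
  · simp [erfSeriesCoeff]
  · refine tsum_congr fun m => ?_
    rw [← mul_assoc, erfSeriesCoeff_succ_mul]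
    ring

theorem hasDerivAt_erfSeries (y : ℝ) : HasDerivAt erfSeries (1 + 2 * y * erfSeries y) y := by
  rw [← tsum_erfSeries_deriv]
  exact hasDerivAt_tsum_of_isPreconnected
    (summable_pow_div_factorial (2 * (|y| + 1) ^ 2)) Metric.isOpen_ball
    (convex_ball 0 (|y| + 1)).isPreconnected (fun m z _ => hasDerivAt_erfSeriesCoeff_mul_pow m z)
    (fun m z hz => norm_erfSeriesCoeff_mul_pow_le m (mem_ball_zero_iff.mp hz).le)
    (Metric.mem_ball_self (by positivity)) (summable_erfSeries 0) (by simp)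

theorem erfSeries_eq (y : ℝ) : erfSeries y = exp (y ^ 2) * ∫ t in (0 : ℝ)..y, exp (-t ^ 2) := by
  have hderiv (z : ℝ) : HasDerivAt (fun w => exp (-w ^ 2) * erfSeries w) (exp (-z ^ 2)) z := by
    refine (((hasDerivAt_pow 2 z).fun_neg.exp).fun_mul (hasDerivAt_erfSeries z)).congr_deriv ?_
    simp only [cast_ofNat, Nat.add_one_sub_one, pow_one, mul_neg, neg_mul]
    ring
  rw [intervalIntegral.integral_eq_sub_of_hasDerivAt (fun z _ => hderiv z)
    ((by fun_prop : Continuous fun t : ℝ => exp (-t ^ 2)).intervalIntegrable _ _)]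
  simp [erfSeries, ← mul_assoc, ← exp_add]

noncomputable def gammaSeriesTerm (x : ℝ) (n : ℕ) : ℝ :=
  Gamma ((n + 2) / 2) * x ^ (n + 2) / (n + 1)!

theorem gammaSeriesTerm_two_mul (x : ℝ) (m : ℕ) :
    gammaSeriesTerm x (2 * m) = 2 * x * (erfSeriesCoeff m * (x / 2) ^ (2 * m + 1)) := by
  have hΓ : Gamma (((2 * m : ℕ) + 2) / 2) = m ! := by
    rw [← Gamma_nat_eq_factorial]; push_cast; ring_nf
  have hfac : ((2 * m + 1)! : ℝ) = (2 * m + 1)‼ * (2 ^ m * m !) := by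
    rw [factorial_eq_mul_doubleFactorial, doubleFactorial_two_mul]; push_cast; rfl
  rw [gammaSeriesTerm, hΓ, hfac, erfSeriesCoeff, div_pow]
  field_simp
  ring

theorem gammaSeriesTerm_two_mul_add_one (x : ℝ) (m : ℕ) :
    gammaSeriesTerm x (2 * m + 1) = √π * x * ((x ^ 2 / 4) ^ (m + 1) / (m + 1)!) := by
  have hΓ : Gamma (((2 * m + 1 : ℕ) + 2) / 2) = (2 * m + 1)‼ * √π / 2 ^ (m + 1) := by
    have h := Gamma_nat_add_half (m + 1)
    rw [show 2 * (m + 1) - 1 = 2 * m + 1 by omega] at h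
    rw [← h]; push_cast; ring_nf
  have hfac : ((2 * m + 1 + 1)! : ℝ) = 2 ^ (m + 1) * (m + 1)! * (2 * m + 1)‼ := by
    rw [factorial_eq_mul_doubleFactorial, show 2 * m + 1 + 1 = 2 * (m + 1) by ring,
      doubleFactorial_two_mul]; push_cast; ring
  rw [gammaSeriesTerm, hΓ, hfac, div_pow, show (4 : ℝ) = 2 ^ 2 by norm_num, ← pow_mul,
    ← pow_mul]
  field_simp
  ring

theorem hasSum_gammaSeriesTerm_two_mul (x : ℝ) :
    HasSum (fun m => gammaSeriesTerm x (2 * m))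
      (2 * x * (exp (x ^ 2 / 4) * ∫ t in (0 : ℝ)..x / 2, exp (-t ^ 2))) := by
  have h := (summable_erfSeries (x / 2)).hasSum.mul_left (2 * x)
  rw [← erfSeries, erfSeries_eq, div_pow, show (2 : ℝ) ^ 2 = 4 by norm_num] at h
  simpa only [gammaSeriesTerm_two_mul] using h

theorem hasSum_gammaSeriesTerm_two_mul_add_one (x : ℝ) :
    HasSum (fun m => gammaSeriesTerm x (2 * m + 1)) (√π * x * (exp (x ^ 2 / 4) - 1)) := by
  have h : HasSum (fun n => (x ^ 2 / 4) ^ n / n !) (exp (x ^ 2 / 4)) := by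
    rw [exp_eq_exp_ℝ]; exact NormedSpace.expSeries_div_hasSum_exp (x ^ 2 / 4)
  rw [← hasSum_nat_add_iff' 1, Finset.sum_range_one, pow_zero, factorial_zero, cast_one,
    div_one] at h
  simpa only [gammaSeriesTerm_two_mul_add_one] using h.mul_left (√π * x)

theorem gamma_series_erf_identity_general (x : ℝ) :
    ∑' n : ℕ, Real.Gamma (((n : ℝ) + 2) / 2) * x ^ (n + 2) /
        (Nat.factorial (n + 1) : ℝ) =
      Real.sqrt Real.pi * x *
        (Real.exp (x ^ 2 / 4) * (1 + erf (x / 2)) - 1) := by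
  change ∑' n, gammaSeriesTerm x n = _
  rw [((hasSum_gammaSeriesTerm_two_mul x).even_add_odd
    (hasSum_gammaSeriesTerm_two_mul_add_one x)).tsum_eq, erf]
  have hπ := sqrt_pos.mpr pi_pos
  field_simp
  ring

/-- The power-series identity
`∑_{n=2}^∞ Γ(n/2) xⁿ / (n−1)! = √π x (e^{x²/4}(1 + erf(x/2)) − 1)`
used in the proof of Theorem 3. -/
theorem gamma_series_erf_identity (x : ℝ) (hx : 0 ≤ x) :
    ∑' n : ℕ, Real.Gamma (((n : ℝ) + 2) / 2) * x ^ (n + 2) /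
        (Nat.factorial (n + 1) : ℝ) =
      Real.sqrt Real.pi * x *
        (Real.exp (x ^ 2 / 4) * (1 + erf (x / 2)) - 1) :=
  gamma_series_erf_identity_general x
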